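/- arXiv:2308.07030 — 5 statements merged into one kernel-verified Lean document; each statement's English description precedes it below -/
import Mathlib

section
/- Let N ≥ 3 and let p, q : ({0,1}^N) → ℝ be two probability distributions on N-bit strings (nonnegative, summing to 1) that are strictly positive at every string. Write the coordinates as indices 0,…,N−1 and let 'last' denote index N−1. Suppose that for every k ∈ {0,…,N−2} the conditional distributions of the pair of bits (a_k, a_last) given the remaining N−2 bits agree for p and q; equivalently, for every string a, p(a) · (Σ_{b : b_j = a_j for all j ∉ {k, last}} q(b)) = q(a) · (Σ_{b : b_j = a_j for all j ∉ {k, last}} p(b)). Then p = q. (A probability distribution on N-bit strings with everywhere-positive conditionals is entirely determined by the conditional distributions of each pair (A_k, A_N) given the other bits.) -/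
/-!
For strictly positive `q`, the hypothesis at `(k, a)` says that `p a / q a` equals the ratio of
the `p`- and `q`-masses of the set of strings agreeing with `a` outside `{k, last}`. That set does
not change when `a_k` or `a_last` is flipped, so `p / q` is invariant under changing any single
bit (for `last` itself use any `k ≠ last`, which exists as `N ≥ 2`). Hence `p / q` is constant,
i.e. `p a * q b = p b * q a`, and summing over `b` with both total masses `1` gives `p = q`.
-/

open Finset Function

theorem Function.eq_of_forall_update_eq {ι β γ : Type*} [Finite ι] [DecidableEq ι]
    (f : (ι → β) → γ) (hf : ∀ a i v, f (update a i v) = f a) (a b : ι → β) : f a = f b := by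
  have := Fintype.ofFinite ι
  suffices ∀ s : Finset ι, ∀ a, (∀ j ∉ s, a j = b j) → f a = f b from
    this univ a fun j hj => absurd (mem_univ j) hj
  intro s
  induction s using Finset.induction_on with
  | empty => exact fun a hab => congrArg f (funext fun j => hab j (notMem_empty j))
  | insert i s _ ih =>
    intro a hab
    rw [← hf a i (b i)]
    refine ih _ fun j hj => ?_
    rcases eq_or_ne j i with rfl | hji
    · exact update_self ..
    · rw [update_of_ne hji]
      exact hab j (by simp [hji, hj])

def pairFiber {ι β : Type*} [Fintype ι] [DecidableEq ι] [Fintype β] [DecidableEq β]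
    (k l : ι) (a : ι → β) : Finset (ι → β) :=
  univ.filter fun b => ∀ j, j ≠ k → j ≠ l → b j = a j

section pairFiber

variable {ι β : Type*} [Fintype ι] [DecidableEq ι] [Fintype β] [DecidableEq β]

theorem mem_pairFiber_self (k l : ι) (a : ι → β) : a ∈ pairFiber k l a := by
  simp [pairFiber]

theorem pairFiber_update {k l i : ι} (hi : i = k ∨ i = l) (a : ι → β) (v : β) :
    pairFiber k l (update a i v) = pairFiber k l a := by
  refine filter_congr fun b _ => forall_congr' fun j => imp_congr_right fun hjk =>
    imp_congr_right fun hjl => ?_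
  rw [update_of_ne (by rcases hi with rfl | rfl <;> assumption)]

end pairFiber

theorem div_eq_sum_div_sum_of_mul_sum_eq {α K : Type*} [Field K] {s : Finset α} {p q : α → K}
    {a : α}
    (hqa : q a ≠ 0) (hqs : ∑ b ∈ s, q b ≠ 0)
    (h : p a * ∑ b ∈ s, q b = q a * ∑ b ∈ s, p b) :
    p a / q a = (∑ b ∈ s, p b) / ∑ b ∈ s, q b := by
  rw [div_eq_div_iff hqa hqs, h, mul_comm]

theorem eq_of_mul_eq_mul_of_sum_eq_one {α R : Type*} [Fintype α] [CommSemiring R] {p q : α → R}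
    (h : ∀ a b, p a * q b = p b * q a) (hp : ∑ a, p a = 1) (hq : ∑ a, q a = 1) : p = q := by
  funext a
  calc p a = p a * ∑ b, q b := by rw [hq, mul_one]
    _ = (∑ b, p b) * q a := by simp only [mul_sum, sum_mul, h a]
    _ = q a := by rw [hp, one_mul]

theorem dist_determined_by_pair_conditionals_general
    (N : ℕ) (hN : 3 ≤ N) (last : Fin N)
    (p q : (Fin N → Bool) → ℝ)
    (hq_pos : ∀ a, 0 < q a)
    (hp_sum : ∑ a, p a = 1) (hq_sum : ∑ a, q a = 1)
    (h : ∀ k : Fin N, k ≠ last → ∀ a : Fin N → Bool,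
      p a * (∑ b ∈ Finset.univ.filter (fun b : Fin N → Bool =>
              ∀ j : Fin N, j ≠ k → j ≠ last → b j = a j), q b)
        = q a * (∑ b ∈ Finset.univ.filter (fun b : Fin N → Bool =>
              ∀ j : Fin N, j ≠ k → j ≠ last → b j = a j), p b)) :
    p = q := by
  have hratio : ∀ k ≠ last, ∀ a, p a / q a =
      (∑ b ∈ pairFiber k last a, p b) / ∑ b ∈ pairFiber k last a, q b := by
    intro k hk a
    refine div_eq_sum_div_sum_of_mul_sum_eq (hq_pos a).ne'
      (sum_pos (fun b _ => hq_pos b) ⟨a, mem_pairFiber_self k last a⟩).ne' ?_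
    -- `h` decides `∀ j : Fin N` by `Nat.decidableForallFin`, not the `Fintype` instance
    unfold pairFiber
    convert h k hk a
  have hupdate : ∀ a i v, p (update a i v) / q (update a i v) = p a / q a := by
    intro a i v
    obtain ⟨k, hk, hik⟩ : ∃ k ≠ last, i = k ∨ i = last := by
      rcases eq_or_ne i last with rfl | hi
      · have : Nontrivial (Fin N) := Fin.nontrivial_iff_two_le.2 (by omega)
        obtain ⟨k, hk⟩ := exists_ne i
        exact ⟨k, hk, Or.inr rfl⟩
      · exact ⟨i, hi, Or.inl rfl⟩
    rw [hratio k hk, hratio k hk, pairFiber_update hik]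
  refine eq_of_mul_eq_mul_of_sum_eq_one (fun a b => ?_) hp_sum hq_sum
  rw [← div_eq_div_iff (hq_pos a).ne' (hq_pos b).ne']
  exact Function.eq_of_forall_update_eq (fun a => p a / q a) hupdate a b

/-- A strictly positive probability distribution on `N`-bit strings (`N ≥ 3`) is entirely
determined by the conditional distributions of each pair of bits `(a_k, a_last)` given the
remaining `N - 2` bits. -/
theorem dist_determined_by_pair_conditionals
    (N : ℕ) (hN : 3 ≤ N) (last : Fin N) (hlast : (last : ℕ) = N - 1)
    (p q : (Fin N → Bool) → ℝ)
    (hp_pos : ∀ a, 0 < p a) (hq_pos : ∀ a, 0 < q a)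
    (hp_sum : ∑ a, p a = 1) (hq_sum : ∑ a, q a = 1)
    (h : ∀ k : Fin N, k ≠ last → ∀ a : Fin N → Bool,
      p a * (∑ b ∈ Finset.univ.filter (fun b : Fin N → Bool =>
              ∀ j : Fin N, j ≠ k → j ≠ last → b j = a j), q b)
        = q a * (∑ b ∈ Finset.univ.filter (fun b : Fin N → Bool =>
              ∀ j : Fin N, j ≠ k → j ≠ last → b j = a j), p b)) :
    p = q :=
  dist_determined_by_pair_conditionals_general N hN last p q hq_pos hp_sum hq_sum h
end

section
/- Let φ, θ ∈ ℝ satisfy cos(2θ)·cos(2φ) < 0 and cos(θ−φ) ≠ 0. Set α = cos(2θ)·cos(θ−φ), β = −cos(2θ)·cos(2φ), γ = cos(2φ)·cos(θ−φ), and η^L(φ,θ) = max( |cos(θ−φ)·(cos 2θ − cos 2φ)| , |cos(θ−φ)·(cos 2θ + cos 2φ)| + |2·cos 2φ·cos 2θ| ). Then the maximum over all a₀, a₁, b₀, b₁ ∈ {−1, 1} of α·a₀b₀ + β·(a₀b₁ + a₁b₀) + γ·a₁b₁ equals η^L(φ,θ), and the minimum equals −η^L(φ,θ). (Local bounds of the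 J_{φ,θ} family of Bell expressions.) -/
open Real

/-- The local bound of the `J_{φ,θ}` family of Bell expressions. -/
noncomputable def etaL (φ θ : ℝ) : ℝ :=
  max (|cos (θ - φ) * (cos (2 * θ) - cos (2 * φ))|)
    (|cos (θ - φ) * (cos (2 * θ) + cos (2 * φ))| + |2 * cos (2 * φ) * cos (2 * θ)|)

private lemma val_le (α β γ a₀ a₁ b₀ b₁ : ℝ)
    (ha₀ : a₀ = -1 ∨ a₀ = 1) (ha₁ : a₁ = -1 ∨ a₁ = 1)
    (hb₀ : b₀ = -1 ∨ b₀ = 1) (hb₁ : b₁ = -1 ∨ b₁ = 1) :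
    α * (a₀ * b₀) + β * (a₀ * b₁ + a₁ * b₀) + γ * (a₁ * b₁)
      ≤ max (|α - γ|) (|α + γ| + |2 * β|) := by
  have m1 := le_max_left (|α - γ|) (|α + γ| + |2 * β|)
  have m2 := le_max_right (|α - γ|) (|α + γ| + |2 * β|)
  have l1 := le_abs_self (α - γ)
  have l2 := neg_abs_le (α - γ)
  have l3 := le_abs_self (α + γ)
  have l4 := neg_abs_le (α + γ)
  have l5 := le_abs_self (2 * β)
  have l6 := neg_abs_le (2 * β)
  rcases ha₀ with rfl | rfl <;> rcases ha₁ with rfl | rfl <;>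
    rcases hb₀ with rfl | rfl <;> rcases hb₁ with rfl | rfl <;> linarith

private lemma max_mem (α β γ : ℝ) :
    ∃ a₀ a₁ b₀ b₁ : ℝ, (a₀ = -1 ∨ a₀ = 1) ∧ (a₁ = -1 ∨ a₁ = 1) ∧
      (b₀ = -1 ∨ b₀ = 1) ∧ (b₁ = -1 ∨ b₁ = 1) ∧
      max (|α - γ|) (|α + γ| + |2 * β|)
        = α * (a₀ * b₀) + β * (a₀ * b₁ + a₁ * b₀) + γ * (a₁ * b₁) := by
  rcases le_total (|α - γ|) (|α + γ| + |2 * β|) with h | h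
  · rw [max_eq_right h]
    by_cases hag : 0 ≤ α + γ <;> by_cases hb : 0 ≤ β
    · exact ⟨1, 1, 1, 1, Or.inr rfl, Or.inr rfl, Or.inr rfl, Or.inr rfl, by
        rw [abs_of_nonneg hag, abs_of_nonneg (by linarith : (0:ℝ) ≤ 2 * β)]; ring⟩
    · exact ⟨1, -1, 1, -1, Or.inr rfl, Or.inl rfl, Or.inr rfl, Or.inl rfl, by
        rw [abs_of_nonneg hag, abs_of_neg (by linarith : 2 * β < 0)]; ring⟩
    · exact ⟨1, -1, -1, 1, Or.inr rfl, Or.inl rfl, Or.inl rfl, Or.inr rfl, by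
        rw [abs_of_neg (by linarith : α + γ < 0),
          abs_of_nonneg (by linarith : (0:ℝ) ≤ 2 * β)]; ring⟩
    · exact ⟨1, 1, -1, -1, Or.inr rfl, Or.inr rfl, Or.inl rfl, Or.inl rfl, by
        rw [abs_of_neg (by linarith : α + γ < 0),
          abs_of_neg (by linarith : 2 * β < 0)]; ring⟩
  · rw [max_eq_left h]
    by_cases hag : 0 ≤ α - γ
    · exact ⟨1, -1, 1, 1, Or.inr rfl, Or.inl rfl, Or.inr rfl, Or.inr rfl, by
        rw [abs_of_nonneg hag]; ring⟩
    · exact ⟨-1, 1, 1, 1, Or.inl rfl, Or.inr rfl, Or.inr rfl, Or.inr rfl, by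
        rw [abs_of_neg (by linarith : α - γ < 0)]; ring⟩

/-- Lemma 8 (i): the local bounds of the `J_{φ,θ}` family are `± etaL φ θ`: the maximum
over deterministic `±1` assignments of the Bell expression equals `etaL φ θ` and the
minimum equals `-etaL φ θ`. -/
theorem Jphitheta_local_bounds (φ θ : ℝ)
    (h1 : cos (2 * θ) * cos (2 * φ) < 0) (h2 : cos (θ - φ) ≠ 0) :
    IsGreatest {x : ℝ | ∃ a₀ a₁ b₀ b₁ : ℝ,
        a₀ ∈ ({-1, 1} : Set ℝ) ∧ a₁ ∈ ({-1, 1} : Set ℝ) ∧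
        b₀ ∈ ({-1, 1} : Set ℝ) ∧ b₁ ∈ ({-1, 1} : Set ℝ) ∧
        x = (cos (2 * θ) * cos (θ - φ)) * (a₀ * b₀)
          + (-(cos (2 * θ) * cos (2 * φ))) * (a₀ * b₁ + a₁ * b₀)
          + (cos (2 * φ) * cos (θ - φ)) * (a₁ * b₁)} (etaL φ θ)
    ∧
    IsLeast {x : ℝ | ∃ a₀ a₁ b₀ b₁ : ℝ,
        a₀ ∈ ({-1, 1} : Set ℝ) ∧ a₁ ∈ ({-1, 1} : Set ℝ) ∧
        b₀ ∈ ({-1, 1} : Set ℝ) ∧ b₁ ∈ ({-1, 1} : Set ℝ) ∧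
        x = (cos (2 * θ) * cos (θ - φ)) * (a₀ * b₀)
          + (-(cos (2 * θ) * cos (2 * φ))) * (a₀ * b₁ + a₁ * b₀)
          + (cos (2 * φ) * cos (θ - φ)) * (a₁ * b₁)} (-(etaL φ θ)) := by
  set α := cos (2 * θ) * cos (θ - φ) with hα
  set β := -(cos (2 * θ) * cos (2 * φ)) with hβ
  set γ := cos (2 * φ) * cos (θ - φ) with hγ
  have hE : etaL φ θ = max (|α - γ|) (|α + γ| + |2 * β|) := by
    unfold etaL
    rw [show cos (θ - φ) * (cos (2 * θ) - cos (2 * φ)) = α - γ by rw [hα, hγ]; ring,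
      show cos (θ - φ) * (cos (2 * θ) + cos (2 * φ)) = α + γ by rw [hα, hγ]; ring,
      show (2 : ℝ) * cos (2 * φ) * cos (2 * θ) = -(2 * β) by rw [hβ]; ring,
      abs_neg]
  simp only [Set.mem_insert_iff, Set.mem_singleton_iff]
  constructor
  · constructor
    · obtain ⟨a₀, a₁, b₀, b₁, ha₀, ha₁, hb₀, hb₁, hv⟩ := max_mem α β γ
      exact ⟨a₀, a₁, b₀, b₁, ha₀, ha₁, hb₀, hb₁, by rw [hE, hv]⟩
    · rintro x ⟨a₀, a₁, b₀, b₁, ha₀, ha₁, hb₀, hb₁, rfl⟩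
      rw [hE]
      exact val_le α β γ a₀ a₁ b₀ b₁ ha₀ ha₁ hb₀ hb₁
  · constructor
    · obtain ⟨a₀, a₁, b₀, b₁, ha₀, ha₁, hb₀, hb₁, hv⟩ := max_mem α β γ
      refine ⟨-a₀, -a₁, b₀, b₁, ?_, ?_, hb₀, hb₁, by rw [hE, hv]; ring⟩
      · rcases ha₀ with rfl | rfl <;> simp
      · rcases ha₁ with rfl | rfl <;> simp
    · rintro x ⟨a₀, a₁, b₀, b₁, ha₀, ha₁, hb₀, hb₁, rfl⟩
      rw [hE]
      have hna₀ : -a₀ = -1 ∨ -a₀ = 1 := by rcases ha₀ with rfl | rfl <;> simp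
      have hna₁ : -a₁ = -1 ∨ -a₁ = 1 := by rcases ha₁ with rfl | rfl <;> simp
      have := val_le α β γ (-a₀) (-a₁) b₀ b₁ hna₀ hna₁ hb₀ hb₁
      nlinarith [this]
end

section
/- Let φ, θ ∈ ℝ satisfy cos(2θ)·cos(2φ) < 0 and cos(θ−φ) ≠ 0, and set α = cos(2θ)·cos(θ−φ), β = −cos(2θ)·cos(2φ), γ = cos(2φ)·cos(θ−φ). Let H be a complex Hilbert space, let A₀, A₁, B₀, B₁ be self-adjoint continuous linear operators on H with A₀² = A₁² = B₀² = B₁² = 1 and A_x·B_y = B_y·A_x for all x, y ∈ {0,1}. Then for every unit vector ψ ∈ H, |Re⟨ψ, (α·A₀B₀ + β·(A₀B₁ + A₁B₀) + γ·A₁B₁) ψ⟩| ≤ 2·sin²(θ+φ)·|sin(θ−φ)|. (Quantum bound of the J_{φ,θ} family of Bell expressions: the quantum bounds are ±η^Q(φ,θ) with η^Q(φ,θ) = 2·sin²(θ+φ)·sin(θ−φ).) -/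
/-!
Moving `A x` onto `ψ`, the Bell value is `Re ⟪A₀ψ, α v₀ + β v₁⟫ + Re ⟪A₁ψ, β v₀ + γ v₁⟫` with
unit vectors `v_y = B_y ψ`, so by Cauchy–Schwarz it is at most `‖α v₀ + β v₁‖ + ‖β v₀ + γ v₁‖`.
With `x = cos 2θ`, `y = cos 2φ`, `c = cos (θ - φ)` and `t = Re ⟪v₀, v₁⟫` these norms are
`|x| √M₁` and `|y| √M₂`, where `M₁ = c² + y² - 2yct` and `M₂ = c² + x² - 2xct`. Since `xy ≤ 0`,
AM–GM on `√(M₁ M₂)` bounds the square of their sum by `(y - x)² (c² - xy)`, which does not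
depend on `t` and equals `(2 sin²(θ + φ) |sin (θ - φ)|)²`.
-/

open Real

theorem add_sq_le_of_bell_norm_sq {x y c t a b : ℝ} (hxy : x * y ≤ 0) (ht : |t| ≤ 1)
    (ha : 0 ≤ a) (hb : 0 ≤ b)
    (ha2 : a ^ 2 = (x * c) ^ 2 + (-(x * y)) ^ 2 + 2 * (x * c * -(x * y)) * t)
    (hb2 : b ^ 2 = (-(x * y)) ^ 2 + (y * c) ^ 2 + 2 * (-(x * y) * (y * c)) * t) :
    (a + b) ^ 2 ≤ (y - x) ^ 2 * (c ^ 2 - x * y) := by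
  set M₁ := c ^ 2 + y ^ 2 - 2 * y * c * t
  set M₂ := c ^ 2 + x ^ 2 - 2 * x * c * t
  have ht2 : t ^ 2 ≤ 1 := by nlinarith [abs_nonneg t, sq_abs t]
  have hM₁ : 0 ≤ M₁ := by nlinarith [sq_nonneg (c - y * t), sq_nonneg y]
  have hM₂ : 0 ≤ M₂ := by nlinarith [sq_nonneg (c - x * t), sq_nonneg x]
  have ha2' : a ^ 2 = x ^ 2 * M₁ := by rw [ha2]; ring
  have hb2' : b ^ 2 = y ^ 2 * M₂ := by rw [hb2]; ring
  have hab : 2 * (a * b) ≤ -(x * y) * (M₁ + M₂) := by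
    refine (pow_le_pow_iff_left₀ (by positivity) (by nlinarith) two_ne_zero).mp ?_
    nlinarith [sq_nonneg (M₁ - M₂)]
  nlinarith

theorem cos_two_mul_sub_sq_mul_eq (φ θ : ℝ) :
    (cos (2 * φ) - cos (2 * θ)) ^ 2 * (cos (θ - φ) ^ 2 - cos (2 * θ) * cos (2 * φ))
      = (2 * sin (θ + φ) ^ 2 * |sin (θ - φ)|) ^ 2 := by
  have hθ : 2 * θ = (θ + φ) + (θ - φ) := by ring
  have hφ : 2 * φ = (θ + φ) - (θ - φ) := by ring
  rw [hθ, hφ, cos_add, cos_sub, mul_pow, sq_abs]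
  linear_combination (-4 * sin (θ + φ) ^ 2 * sin (θ - φ) ^ 2 * cos (θ - φ) ^ 2)
    * cos_sq_add_sin_sq (θ + φ) + 4 * sin (θ + φ) ^ 4 * sin (θ - φ) ^ 2 * cos_sq_add_sin_sq (θ - φ)

theorem norm_ofReal_smul_add_ofReal_smul_sq {H : Type*} [NormedAddCommGroup H]
    [InnerProductSpace ℂ H] {u v : H} (hu : ‖u‖ = 1) (hv : ‖v‖ = 1) (x y : ℝ) :
    ‖(x : ℂ) • u + (y : ℂ) • v‖ ^ 2 = x ^ 2 + y ^ 2 + 2 * (x * y) * (inner ℂ u v).re := by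
  rw [@norm_add_sq ℂ, norm_smul, norm_smul, inner_smul_left, inner_smul_right, hu, hv]
  simp only [Complex.norm_real, norm_eq_abs, sq_abs, mul_one, Complex.conj_ofReal, RCLike.mul_re,
    RCLike.re_to_complex, RCLike.im_to_complex, Complex.ofReal_re, Complex.ofReal_im, zero_mul,
    sub_zero, RCLike.mul_im, add_zero]
  ring

theorem abs_re_inner_le_norm_of_norm_eq_one {H : Type*} [NormedAddCommGroup H]
    [InnerProductSpace ℂ H] {u : H} (hu : ‖u‖ = 1) (w : H) : |(inner ℂ u w).re| ≤ ‖w‖ :=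
  calc |(inner ℂ u w).re| ≤ ‖inner ℂ u w‖ := Complex.abs_re_le_norm _
    _ ≤ ‖u‖ * ‖w‖ := norm_inner_le_norm _ _
    _ = ‖w‖ := by rw [hu, one_mul]

section BellOperator

variable {H : Type*} [NormedAddCommGroup H] [InnerProductSpace ℂ H] [CompleteSpace H]

theorem IsSelfAdjoint.norm_map_of_comp_self_eq_one {T : H →L[ℂ] H} (hT : IsSelfAdjoint T)
    (hT2 : T ∘L T = 1) (x : H) : ‖T x‖ = ‖x‖ :=
  T.norm_map_iff_adjoint_comp_self.mpr
    (by rwa [← ContinuousLinearMap.star_eq_adjoint, hT.star_eq]) x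

noncomputable def bellOperator (A B : Fin 2 → H →L[ℂ] H) (α β γ : ℝ) : H →L[ℂ] H :=
  (α : ℂ) • (A 0 ∘L B 0) + (β : ℂ) • (A 0 ∘L B 1 + A 1 ∘L B 0) + (γ : ℂ) • (A 1 ∘L B 1)

theorem inner_bellOperator_apply {A : Fin 2 → H →L[ℂ] H} (hA : ∀ x, IsSelfAdjoint (A x))
    (B : Fin 2 → H →L[ℂ] H) (α β γ : ℝ) (ψ : H) :
    inner ℂ ψ (bellOperator A B α β γ ψ)
      = inner ℂ (A 0 ψ) ((α : ℂ) • B 0 ψ + (β : ℂ) • B 1 ψ)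
        + inner ℂ (A 1 ψ) ((β : ℂ) • B 0 ψ + (γ : ℂ) • B 1 ψ) := by
  have h₀ := (hA 0).isSymmetric ψ
  have h₁ := (hA 1).isSymmetric ψ
  simp only [ContinuousLinearMap.coe_coe] at h₀ h₁
  simp only [bellOperator, add_apply, smul_apply,
    ContinuousLinearMap.comp_apply, inner_add_right, inner_smul_right, h₀, h₁, map_add, map_smul]
  ring

theorem abs_re_inner_bellOperator_le {A : Fin 2 → H →L[ℂ] H} (hA : ∀ x, IsSelfAdjoint (A x))
    (hA2 : ∀ x, A x ∘L A x = 1) (B : Fin 2 → H →L[ℂ] H) (α β γ : ℝ) {ψ : H} (hψ : ‖ψ‖ = 1) :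
    |(inner ℂ ψ (bellOperator A B α β γ ψ)).re|
      ≤ ‖(α : ℂ) • B 0 ψ + (β : ℂ) • B 1 ψ‖ + ‖(β : ℂ) • B 0 ψ + (γ : ℂ) • B 1 ψ‖ := by
  have hAψ (x : Fin 2) : ‖A x ψ‖ = 1 := by
    rw [(hA x).norm_map_of_comp_self_eq_one (hA2 x), hψ]
  rw [inner_bellOperator_apply hA, Complex.add_re]
  exact (abs_add_le _ _).trans (add_le_add (abs_re_inner_le_norm_of_norm_eq_one (hAψ 0) _)
    (abs_re_inner_le_norm_of_norm_eq_one (hAψ 1) _))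

end BellOperator

theorem Jphitheta_quantum_bound_general (φ θ : ℝ)
    (h1 : cos (2 * θ) * cos (2 * φ) < 0)
    {H : Type*} [NormedAddCommGroup H] [InnerProductSpace ℂ H] [CompleteSpace H]
    (A B : Fin 2 → H →L[ℂ] H)
    (hAsa : ∀ x, IsSelfAdjoint (A x)) (hBsa : ∀ y, IsSelfAdjoint (B y))
    (hA2 : ∀ x, (A x) ∘L (A x) = 1) (hB2 : ∀ y, (B y) ∘L (B y) = 1)
    (ψ : H) (hψ : ‖ψ‖ = 1) :
    |(inner ℂ ψ
      ((((cos (2 * θ) * cos (θ - φ) : ℝ) : ℂ) • ((A 0) ∘L (B 0))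
        + ((-(cos (2 * θ) * cos (2 * φ)) : ℝ) : ℂ) • ((A 0) ∘L (B 1) + (A 1) ∘L (B 0))
        + (((cos (2 * φ) * cos (θ - φ) : ℝ)) : ℂ) • ((A 1) ∘L (B 1))) ψ) : ℂ).re|
      ≤ 2 * sin (θ + φ) ^ 2 * |sin (θ - φ)| := by
  have hBψ (y : Fin 2) : ‖B y ψ‖ = 1 := by
    rw [(hBsa y).norm_map_of_comp_self_eq_one (hB2 y), hψ]
  have ht : |(inner ℂ (B 0 ψ) (B 1 ψ)).re| ≤ 1 :=
    (abs_re_inner_le_norm_of_norm_eq_one (hBψ 0) _).trans_eq (hBψ 1)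
  refine (abs_re_inner_bellOperator_le hAsa hA2 B _ _ _ hψ).trans
    ((pow_le_pow_iff_left₀ (by positivity) (by positivity) two_ne_zero).mp ?_)
  rw [← cos_two_mul_sub_sq_mul_eq]
  exact add_sq_le_of_bell_norm_sq h1.le ht (norm_nonneg _) (norm_nonneg _)
    (norm_ofReal_smul_add_ofReal_smul_sq (hBψ 0) (hBψ 1) _ _)
    (norm_ofReal_smul_add_ofReal_smul_sq (hBψ 0) (hBψ 1) _ _)

/-- Lemma 8 (ii): quantum bound of the `J_{φ,θ}` family. For any commuting-operator
quantum strategy with `±1`-valued self-adjoint observables and any unit vector `ψ`,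
the Bell value is bounded in absolute value by `η^Q(φ,θ) = 2 sin²(θ+φ)|sin(θ−φ)|`. -/
theorem Jphitheta_quantum_bound (φ θ : ℝ)
    (h1 : cos (2 * θ) * cos (2 * φ) < 0) (h2 : cos (θ - φ) ≠ 0)
    {H : Type*} [NormedAddCommGroup H] [InnerProductSpace ℂ H] [CompleteSpace H]
    (A B : Fin 2 → H →L[ℂ] H)
    (hAsa : ∀ x, IsSelfAdjoint (A x)) (hBsa : ∀ y, IsSelfAdjoint (B y))
    (hA2 : ∀ x, (A x) ∘L (A x) = 1) (hB2 : ∀ y, (B y) ∘L (B y) = 1)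
    (hcomm : ∀ x y, (A x) ∘L (B y) = (B y) ∘L (A x))
    (ψ : H) (hψ : ‖ψ‖ = 1) :
    |(inner ℂ ψ
      ((((cos (2 * θ) * cos (θ - φ) : ℝ) : ℂ) • ((A 0) ∘L (B 0))
        + ((-(cos (2 * θ) * cos (2 * φ)) : ℝ) : ℂ) • ((A 0) ∘L (B 1) + (A 1) ∘L (B 0))
        + (((cos (2 * φ) * cos (θ - φ) : ℝ)) : ℂ) • ((A 1) ∘L (B 1))) ψ) : ℂ).re|
      ≤ 2 * sin (θ + φ) ^ 2 * |sin (θ - φ)| :=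
  Jphitheta_quantum_bound_general φ θ h1 A B hAsa hBsa hA2 hB2 ψ hψ
end

section
/- Let φ, θ ∈ ℝ satisfy cos(2θ)·cos(2φ) < 0 and cos(θ−φ) ≠ 0. Then |2·sin²(θ+φ)·sin(θ−φ)| > max( |cos(θ−φ)·(cos 2θ − cos 2φ)| , |cos(θ−φ)·(cos 2θ + cos 2φ)| + |2·cos 2φ·cos 2θ| ). (For the J_{φ,θ} family of Bell expressions, the absolute quantum bound strictly exceeds the local bound: |η^Q(φ,θ)| > η^L(φ,θ).) -/
open Real

set_option maxHeartbeats 1000000 in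
/-- Lemma 8 (iii): for the `J_{φ,θ}` family of Bell expressions, the absolute quantum
bound strictly exceeds the local bound: `|η^Q(φ,θ)| > η^L(φ,θ)`. -/
theorem Jphitheta_quantum_gt_local (φ θ : ℝ)
    (h1 : cos (2 * θ) * cos (2 * φ) < 0) (h2 : cos (θ - φ) ≠ 0) :
    |2 * sin (θ + φ) ^ 2 * sin (θ - φ)| >
      max (|cos (θ - φ) * (cos (2 * θ) - cos (2 * φ))|)
        (|cos (θ - φ) * (cos (2 * θ) + cos (2 * φ))| + |2 * cos (2 * φ) * cos (2 * θ)|) := by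
  set S := sin (θ + φ) with hS
  set C := cos (θ + φ) with hC
  set s := sin (θ - φ) with hs
  set c := cos (θ - φ) with hc
  have h2θ : cos (2 * θ) = C * c - S * s := by
    have h : 2 * θ = (θ + φ) + (θ - φ) := by ring
    rw [h, cos_add, hC, hc, hS, hs]
  have h2φ : cos (2 * φ) = C * c + S * s := by
    have h : 2 * φ = (θ + φ) - (θ - φ) := by ring
    rw [h, cos_sub, hC, hc, hS, hs]
  have pyth1 : S ^ 2 + C ^ 2 = 1 := sin_sq_add_cos_sq _
  have pyth2 : s ^ 2 + c ^ 2 = 1 := sin_sq_add_cos_sq _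
  rw [h2θ, h2φ] at h1 ⊢
  have key : C ^ 2 * c ^ 2 < S ^ 2 * s ^ 2 := by nlinarith [h1]
  -- abs variables
  set u := |s| with hu
  set v := |C| with hv
  set ac := |c| with hac
  set aS := |S| with haS
  have hu2 : u ^ 2 = s ^ 2 := sq_abs s
  have hv2 : v ^ 2 = C ^ 2 := sq_abs C
  have hac2 : ac ^ 2 = c ^ 2 := sq_abs c
  have haS2 : aS ^ 2 = S ^ 2 := sq_abs S
  have hu0 : 0 ≤ u := abs_nonneg s
  have hv0 : 0 ≤ v := abs_nonneg C
  have hac0 : 0 < ac := abs_pos.mpr h2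
  have haS0 : 0 ≤ aS := abs_nonneg S
  have hupos : 0 < u := by
    rcases hu0.lt_or_eq with h | h
    · exact h
    · exfalso; nlinarith [sq_nonneg (C * c), sq_nonneg (S * s)]
  have hu1 : u < 1 := by nlinarith
  have huv : v < u := by nlinarith
  have hSac : ac < aS := by nlinarith
  rw [gt_iff_lt, max_lt_iff]
  have e1 : |2 * S ^ 2 * s| = 2 * S ^ 2 * u := by
    rw [abs_mul, abs_mul, abs_two, abs_of_nonneg (sq_nonneg S), hu]
  have e2 : |c * (C * c - S * s - (C * c + S * s))| = 2 * (ac * (aS * u)) := by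
    have h : c * (C * c - S * s - (C * c + S * s)) = -(2 * (c * (S * s))) := by ring
    rw [h, abs_neg, abs_mul, abs_mul, abs_mul, abs_two, hac, haS, hu]
  have e3 : |c * (C * c - S * s + (C * c + S * s))| = 2 * (v * ac ^ 2) := by
    have h : c * (C * c - S * s + (C * c + S * s)) = 2 * (C * c ^ 2) := by ring
    rw [h, abs_mul, abs_mul, abs_two, hv, abs_pow, hac]
  have e4 : |2 * (C * c + S * s) * (C * c - S * s)| = 2 * (S ^ 2 * s ^ 2 - C ^ 2 * c ^ 2) := by
    have h : 2 * (C * c + S * s) * (C * c - S * s) = 2 * (C ^ 2 * c ^ 2 - S ^ 2 * s ^ 2) := by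
      ring
    rw [h, abs_of_nonpos (by nlinarith)]
    ring
  rw [e1, e2, e3, e4]
  have haSpos : 0 < aS := hac0.trans hSac
  have p1 : aS ^ 2 + v ^ 2 = 1 := by rw [haS2, hv2]; exact pyth1
  have p2 : u ^ 2 + ac ^ 2 = 1 := by rw [hu2, hac2]; exact pyth2
  rw [← haS2, ← hu2, ← hv2, ← hac2]
  constructor
  · have h := mul_lt_mul_of_pos_right hSac (mul_pos haSpos hupos)
    nlinarith [h]
  · nlinarith [mul_pos (mul_pos (sub_pos.mpr hu1) (sub_pos.mpr (huv.trans hu1))) (sub_pos.mpr huv),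
      p1, p2]
end

section
/- For every natural number N ≥ 1 and all θ, φ ∈ ℝ, the following identity holds: 2^{(1−N)/2} · Σ_{n=0}^{N} (N choose n) · cos( (π/2)·((N−1)/2 − n) ) · sin( n·θ − (N−n)·φ ) = 2^{(N−1)/2} · ( cos((θ+φ)/2 + π/4)^N · sin( N·(θ−φ)/2 + π/4 ) + cos((θ+φ)/2 − π/4)^N · sin( N·(θ−φ)/2 − π/4 ) ). (This expresses the MABK value of the symmetric GHZ strategy with measurement angles −φ and θ, whose full correlators satisfy ⟨A_x⟩ = sin(nθ − (N−n)φ) for input strings x of Hamming weight n, in closed form.) -/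
open Real

lemma cos_mul_sin_split (x y : ℝ) :
    Real.cos x * Real.sin y
      = (1 / 2) * Real.sin (x + y) + (1 / 2) * Real.sin (y - x) := by
  rw [Real.sin_add, Real.sin_sub]; ring

lemma sum_choose_sin (N : ℕ) (c d : ℝ) :
    ∑ n ∈ Finset.range (N + 1), (N.choose n : ℝ) * Real.sin (c + n * d)
      = (2 * Real.cos (d / 2)) ^ N * Real.sin (c + N * (d / 2)) := by
  have h1 : Complex.exp (d * Complex.I) + 1
      = ((2 * Real.cos (d / 2) : ℝ) : ℂ) * Complex.exp (((d / 2 : ℝ)) * Complex.I) := by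
    push_cast
    rw [Complex.two_cos, add_mul, ← Complex.exp_add, ← Complex.exp_add]
    push_cast
    ring_nf
    rw [Complex.exp_zero]
    ring
  have key : ∑ n ∈ Finset.range (N + 1),
      (N.choose n : ℂ) * Complex.exp (((c + n * d : ℝ)) * Complex.I)
      = ((2 * Real.cos (d / 2) : ℝ) : ℂ) ^ N
          * Complex.exp (((c + N * (d / 2) : ℝ)) * Complex.I) := by
    have hb := add_pow (Complex.exp (d * Complex.I)) 1 N
    calc ∑ n ∈ Finset.range (N + 1),
          (N.choose n : ℂ) * Complex.exp (((c + n * d : ℝ)) * Complex.I)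
        = ∑ n ∈ Finset.range (N + 1),
            Complex.exp (d * Complex.I) ^ n * 1 ^ (N - n) * (N.choose n)
              * Complex.exp ((c : ℝ) * Complex.I) := by
          refine Finset.sum_congr rfl fun n _ => ?_
          have harg : ((c + n * d : ℝ) : ℂ) * Complex.I
              = (n : ℂ) * ((d : ℂ) * Complex.I) + (c : ℝ) * Complex.I := by
            push_cast; ring
          rw [harg, Complex.exp_add, Complex.exp_nat_mul, one_pow]
          ring
      _ = (Complex.exp (d * Complex.I) + 1) ^ N * Complex.exp ((c : ℝ) * Complex.I) := by
          rw [hb, Finset.sum_mul]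
      _ = ((2 * Real.cos (d / 2) : ℝ) : ℂ) ^ N
            * Complex.exp (((c + N * (d / 2) : ℝ)) * Complex.I) := by
          rw [h1, mul_pow, ← Complex.exp_nat_mul]
          rw [mul_assoc, ← Complex.exp_add]
          norm_cast
          rw [mul_comm ((N : ℂ)) _]
          push_cast
          ring_nf
  have him := congrArg Complex.im key
  simp only [Complex.im_sum, Complex.mul_im, Complex.natCast_im, Complex.natCast_re,
    Complex.exp_ofReal_mul_I_im, Complex.exp_ofReal_mul_I_re, ← Complex.ofReal_pow,
    Complex.ofReal_im, Complex.ofReal_re, zero_mul, mul_zero, add_zero, zero_add] at him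
  exact him

/-- Closed form of the MABK value of the symmetric GHZ strategy with measurement angles
`−φ` and `θ`: grouping the input strings by Hamming weight `n`, whose correlators are
`sin(nθ − (N−n)φ)`, gives the binomial sum on the left. -/
theorem mabk_binomial_closed_form (N : ℕ) (hN : 1 ≤ N) (θ φ : ℝ) :
    (2 : ℝ) ^ ((1 - (N : ℝ)) / 2) *
        ∑ n ∈ Finset.range (N + 1),
          (N.choose n : ℝ) * cos ((π / 2) * (((N : ℝ) - 1) / 2 - (n : ℝ)))
            * sin ((n : ℝ) * θ - ((N : ℝ) - (n : ℝ)) * φ)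
      = (2 : ℝ) ^ (((N : ℝ) - 1) / 2) *
          (cos ((θ + φ) / 2 + π / 4) ^ N * sin ((N : ℝ) * (θ - φ) / 2 + π / 4)
            + cos ((θ + φ) / 2 - π / 4) ^ N * sin ((N : ℝ) * (θ - φ) / 2 - π / 4)) := by
  have hsplit : ∀ n ∈ Finset.range (N + 1),
      (N.choose n : ℝ) * cos ((π / 2) * (((N : ℝ) - 1) / 2 - (n : ℝ)))
            * sin ((n : ℝ) * θ - ((N : ℝ) - (n : ℝ)) * φ)
      = (1 / 2) * ((N.choose n : ℝ) *
            Real.sin ((π * ((N : ℝ) - 1) / 4 - N * φ) + n * (θ + φ - π / 2)))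
        + (1 / 2) * ((N.choose n : ℝ) *
            Real.sin ((-(π * ((N : ℝ) - 1) / 4) - N * φ) + n * (θ + φ + π / 2))) := by
    intro n _
    have e1 : (π * ((N : ℝ) - 1) / 4 - N * φ) + n * (θ + φ - π / 2)
        = (π / 2) * (((N : ℝ) - 1) / 2 - (n : ℝ))
          + ((n : ℝ) * θ - ((N : ℝ) - (n : ℝ)) * φ) := by ring
    have e2 : (-(π * ((N : ℝ) - 1) / 4) - N * φ) + n * (θ + φ + π / 2)
        = ((n : ℝ) * θ - ((N : ℝ) - (n : ℝ)) * φ)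
          - (π / 2) * (((N : ℝ) - 1) / 2 - (n : ℝ)) := by ring
    rw [mul_assoc, cos_mul_sin_split, ← e1, ← e2]
    ring
  rw [Finset.sum_congr rfl hsplit, Finset.sum_add_distrib, ← Finset.mul_sum, ← Finset.mul_sum,
    sum_choose_sin, sum_choose_sin]
  have a1 : (θ + φ - π / 2) / 2 = (θ + φ) / 2 - π / 4 := by ring
  have a2 : (θ + φ + π / 2) / 2 = (θ + φ) / 2 + π / 4 := by ring
  have b1 : (π * ((N : ℝ) - 1) / 4 - N * φ) + N * ((θ + φ - π / 2) / 2)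
      = (N : ℝ) * (θ - φ) / 2 - π / 4 := by ring
  have b2 : (-(π * ((N : ℝ) - 1) / 4) - N * φ) + N * ((θ + φ + π / 2) / 2)
      = (N : ℝ) * (θ - φ) / 2 + π / 4 := by ring
  rw [b1, b2, a1, a2, mul_pow, mul_pow]
  have hpow : (2 : ℝ) ^ ((1 - (N : ℝ)) / 2) * ((1 / 2) * (2 : ℝ) ^ N)
      = (2 : ℝ) ^ (((N : ℝ) - 1) / 2) := by
    rw [show ((2 : ℝ) ^ N) = (2 : ℝ) ^ (N : ℝ) from (Real.rpow_natCast 2 N).symm,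
      show (1 / 2 : ℝ) = (2 : ℝ) ^ (-1 : ℝ) by rw [Real.rpow_neg_one]; norm_num,
      ← Real.rpow_add (by norm_num), ← Real.rpow_add (by norm_num)]
    ring_nf
  calc (2 : ℝ) ^ ((1 - (N : ℝ)) / 2) *
        (1 / 2 * ((2 : ℝ) ^ N * cos ((θ + φ) / 2 - π / 4) ^ N
            * sin ((N : ℝ) * (θ - φ) / 2 - π / 4))
          + 1 / 2 * ((2 : ℝ) ^ N * cos ((θ + φ) / 2 + π / 4) ^ N
            * sin ((N : ℝ) * (θ - φ) / 2 + π / 4)))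
      = ((2 : ℝ) ^ ((1 - (N : ℝ)) / 2) * ((1 / 2) * (2 : ℝ) ^ N)) *
          (cos ((θ + φ) / 2 + π / 4) ^ N * sin ((N : ℝ) * (θ - φ) / 2 + π / 4)
            + cos ((θ + φ) / 2 - π / 4) ^ N * sin ((N : ℝ) * (θ - φ) / 2 - π / 4)) := by ring
    _ = _ := by rw [hpow]
end
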